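/- arXiv:2212.13542 — 2 statements merged into one kernel-verified Lean document; each statement's English description precedes it below -/
import Mathlib

section
/- For m ≥ 1, the gcd of the binomial coefficients C(m+1, 1), C(m+1, 2), ..., C(m+1, m-1) together with C(m+1,1) equals p if m+1 = p^s for some prime p and s ≥ 1, and equals 1 otherwise. -/
/-- `d m` is the gcd of the binomial coefficients `C(m+1,1), ..., C(m+1,m-1)`
(with `C(m+1,1)` always included so that the family is nonempty). -/
def dGcd (m : ℕ) : ℕ :=
  Nat.gcd ((m + 1).choose 1) ((Finset.Icc 1 (m - 1)).gcd fun i => (m + 1).choose i)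

/-- If `p ^ a` exactly divides `n`, then `p` does not divide `choose n (p ^ a)`
(Kummer: no carries when adding `p ^ a` and `n - p ^ a` in base `p`). -/
lemma aux_not_dvd_choose {p n a : ℕ} (hp : p.Prime) (hn : 0 < n) (h1 : p ^ a ∣ n)
    (h2 : ¬ p ^ (a + 1) ∣ n) (hkn : p ^ a ≤ n) : ¬ p ∣ n.choose (p ^ a) := by
  rw [← emultiplicity_eq_zero,
    hp.emultiplicity_choose hkn (Nat.lt_succ_self (Nat.log p n))]
  norm_cast
  rw [Finset.card_eq_zero, Finset.filter_eq_empty_iff]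
  intro i hi
  simp only [Finset.mem_Ico] at hi
  obtain ⟨b, hb⟩ := h1
  have hpb : ¬ p ∣ b := fun hdvd =>
    h2 (by rw [hb, pow_succ]; exact mul_dvd_mul_left _ hdvd)
  have hb1 : 1 ≤ b := Nat.pos_of_ne_zero (fun h => by simp [h] at hb; omega)
  rcases le_or_gt i a with h | h
  · have d1 : p ^ i ∣ p ^ a := pow_dvd_pow p h
    have e1 : p ^ a % p ^ i = 0 := Nat.mod_eq_zero_of_dvd d1
    have e2 : (n - p ^ a) % p ^ i = 0 :=
      Nat.mod_eq_zero_of_dvd (Nat.dvd_sub (d1.trans ⟨b, hb⟩) d1)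
    have hpos := pow_pos hp.pos i
    omega
  · have hpi : p ^ i = p ^ a * p ^ (i - a) := by rw [← pow_add]; congr 1; omega
    have e1 : p ^ a % p ^ i = p ^ a :=
      Nat.mod_eq_of_lt (Nat.pow_lt_pow_right hp.one_lt h)
    have hsub : n - p ^ a = p ^ a * (b - 1) := by rw [hb, Nat.mul_sub, Nat.mul_one]
    have e2 : (n - p ^ a) % p ^ i = p ^ a * ((b - 1) % p ^ (i - a)) := by
      rw [hsub, hpi, Nat.mul_mod_mul_left]
    have hq2 : 2 ≤ p ^ (i - a) := le_trans hp.two_le (Nat.le_self_pow (by omega) p)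
    have hne : (b - 1) % p ^ (i - a) ≠ p ^ (i - a) - 1 := by
      intro hEq
      apply hpb
      have hdm := Nat.div_add_mod (b - 1) (p ^ (i - a))
      have hbq : b = p ^ (i - a) * ((b - 1) / p ^ (i - a)) + p ^ (i - a) := by omega
      have hdvdb : p ^ (i - a) ∣ b :=
        ⟨(b - 1) / p ^ (i - a) + 1, by rw [Nat.mul_add, Nat.mul_one]; exact hbq⟩
      exact dvd_trans (dvd_pow_self p (by omega)) hdvdb
    have hlt : (b - 1) % p ^ (i - a) < p ^ (i - a) := Nat.mod_lt _ (by omega)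
    rw [e1, e2, hpi]
    intro hcon
    have hA : 0 < p ^ a := pow_pos hp.pos a
    have hr1 : (b - 1) % p ^ (i - a) + 1 < p ^ (i - a) := by omega
    have hkey : p ^ a * ((b - 1) % p ^ (i - a) + 1) < p ^ a * p ^ (i - a) :=
      mul_lt_mul_of_pos_left hr1 hA
    nlinarith [hkey, hcon]

theorem gcd_row_pascal (m : ℕ) (hm : 1 ≤ m) :
    (∀ p s : ℕ, p.Prime → 1 ≤ s → m + 1 = p ^ s → dGcd m = p) ∧
    ((¬ ∃ p s : ℕ, p.Prime ∧ 1 ≤ s ∧ m + 1 = p ^ s) → dGcd m = 1) := by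
  constructor
  · rintro p s hp hs hmps
    have hchoose1 : (m + 1).choose 1 = m + 1 := Nat.choose_one_right _
    have hdvd_n : dGcd m ∣ p ^ s := by
      have h0 : dGcd m ∣ (m + 1).choose 1 := Nat.gcd_dvd_left _ _
      rwa [hchoose1, hmps] at h0
    have hpd : p ∣ dGcd m := by
      refine Nat.dvd_gcd ?_ ?_
      · rw [hchoose1, hmps]; exact dvd_pow_self p (by omega)
      · refine Finset.dvd_gcd fun i hi => ?_
        simp only [Finset.mem_Icc] at hi
        rw [hmps]
        exact hp.dvd_choose_pow (by omega) (by omega)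
    have hp2 : ¬ p ^ 2 ∣ dGcd m := by
      rcases eq_or_lt_of_le hs with h1 | h2
      · intro hdvd
        have hdd : p ^ 2 ∣ p ^ 1 := by
          have := hdvd.trans hdvd_n; rwa [← h1] at this
        have := (Nat.pow_dvd_pow_iff_le_right hp.one_lt).mp hdd
        omega
      · have h2a : 2 ≤ p ^ (s - 1) := le_trans hp.two_le (Nat.le_self_pow (by omega) p)
        have hps : p * p ^ (s - 1) = p ^ s := by
          rw [← pow_succ']; congr 1; omega
        have h2b : 2 * p ^ (s - 1) ≤ p ^ s := by
          rw [← hps]; exact Nat.mul_le_mul_right _ hp.two_le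
        have hmem : p ^ (s - 1) ∈ Finset.Icc 1 (m - 1) :=
          Finset.mem_Icc.mpr ⟨by omega, by omega⟩
        have hdc : dGcd m ∣ (m + 1).choose (p ^ (s - 1)) :=
          (Nat.gcd_dvd_right _ _).trans (Finset.gcd_dvd hmem)
        intro hdvd
        have hpp : p ^ 2 ∣ (p ^ s).choose (p ^ (s - 1)) := by
          have := hdvd.trans hdc; rwa [hmps] at this
        have hkn : p ^ (s - 1) ≤ p ^ s := Nat.pow_le_pow_right hp.pos (by omega)
        have hk0 : p ^ (s - 1) ≠ 0 := by omega
        have hmul : emultiplicity p ((p ^ s).choose (p ^ (s - 1))) =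
            ((s - multiplicity p (p ^ (s - 1)) : ℕ) : ℕ∞) :=
          hp.emultiplicity_choose_prime_pow hkn hk0
        rw [multiplicity_pow_self_of_prime hp.prime] at hmul
        have hle2 : (2 : ℕ∞) ≤ emultiplicity p ((p ^ s).choose (p ^ (s - 1))) :=
          pow_dvd_iff_le_emultiplicity.mp hpp
        rw [hmul] at hle2
        have : (2 : ℕ) ≤ s - (s - 1) := by exact_mod_cast hle2
        omega
    obtain ⟨t, ht, hteq⟩ := (Nat.dvd_prime_pow hp).mp hdvd_n
    have ht1 : 1 ≤ t := by
      by_contra h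
      have : t = 0 := by omega
      rw [hteq, this, pow_zero] at hpd
      have := Nat.le_of_dvd one_pos hpd
      have := hp.two_le
      omega
    have ht2 : t ≤ 1 := by
      by_contra h
      exact hp2 (hteq ▸ pow_dvd_pow p (by omega))
    have : t = 1 := by omega
    rw [hteq, this, pow_one]
  · intro hne
    by_contra hne1
    have hd_n : dGcd m ∣ m + 1 := by
      have h0 : dGcd m ∣ (m + 1).choose 1 := Nat.gcd_dvd_left _ _
      rwa [Nat.choose_one_right] at h0
    obtain ⟨p, hp, hpd⟩ := Nat.exists_prime_and_dvd hne1
    have hpn : p ∣ m + 1 := hpd.trans hd_n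
    have ha1 : 1 ≤ (m + 1).factorization p :=
      hp.factorization_pos_of_dvd (by omega) hpn
    set a := (m + 1).factorization p with ha
    have hdvd : p ^ a ∣ m + 1 := Nat.ordProj_dvd _ _
    have hnd : ¬ p ^ (a + 1) ∣ m + 1 := Nat.pow_succ_factorization_not_dvd (by omega) hp
    obtain ⟨b, hbeq⟩ := hdvd
    have hA2 : 2 ≤ p ^ a := le_trans hp.two_le (Nat.le_self_pow (by omega) p)
    have hb2 : 2 ≤ b := by
      rcases b with _ | _ | b
      · omega
      · exact absurd ⟨p, a, hp, ha1, by simpa using hbeq⟩ hne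
      · omega
    have hle : p ^ a ≤ m - 1 := by
      have h2 : p ^ a * 2 ≤ m + 1 := by
        rw [hbeq]; exact Nat.mul_le_mul_left _ hb2
      omega
    have hmem : p ^ a ∈ Finset.Icc 1 (m - 1) := Finset.mem_Icc.mpr ⟨by omega, hle⟩
    have hdc : dGcd m ∣ (m + 1).choose (p ^ a) :=
      (Nat.gcd_dvd_right _ _).trans (Finset.gcd_dvd hmem)
    exact aux_not_dvd_choose hp (by omega) ⟨b, hbeq⟩ hnd (by omega) (hpd.trans hdc)
end

section
/- If m+1 is not a prime power (and m ≥ 2), then the gcd of C(m+1, 1), ..., C(m+1, m) equals 1. -/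
theorem gcd_choose_not_prime_pow (m : ℕ) (hm : 2 ≤ m) (h : ¬ IsPrimePow (m + 1)) :
    ((Finset.Icc 1 m).gcd fun i => (m + 1).choose i) = 1 := by
  by_contra hd
  set n := m + 1 with hn
  obtain ⟨p, hp, hpd⟩ := Nat.exists_prime_and_dvd hd
  have hfact : Fact p.Prime := ⟨hp⟩
  have h1 : p ∣ n := by
    have h1m : (1 : ℕ) ∈ Finset.Icc 1 m := by simp; omega
    have := hpd.trans (Finset.gcd_dvd (f := fun i => n.choose i) h1m)
    simpa using this
  set a := n.factorization p with ha
  set s := n / p ^ a with hs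
  have hn0 : n ≠ 0 := by omega
  have hps : ¬ p ∣ s := Nat.not_dvd_ordCompl hp hn0
  have hnps : n = p ^ a * s := (Nat.ordProj_mul_ordCompl_eq_self n p).symm
  have ha1 : 1 ≤ a := hp.factorization_pos_of_dvd hn0 h1
  clear_value s
  have hs0 : s ≠ 0 := by
    intro h0; rw [h0, mul_zero] at hnps; exact hn0 hnps
  have hs1 : s ≠ 1 := by
    intro h1'
    exact h ⟨p, a, hp.prime, ha1, by rw [← hnps.symm, h1', mul_one]⟩
  have hs2 : 2 ≤ s := (Nat.two_le_iff s).mpr ⟨hs0, hs1⟩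
  have hpa1 : 1 ≤ p ^ a := Nat.one_le_pow _ _ hp.pos
  have hpam : p ^ a ≤ m := by
    have h2a : p ^ a * 2 ≤ p ^ a * s := Nat.mul_le_mul_left _ hs2
    omega
  have hmem : p ^ a ∈ Finset.Icc 1 m := Finset.mem_Icc.mpr ⟨hpa1, hpam⟩
  have h2 : p ∣ n.choose (p ^ a) := hpd.trans (Finset.gcd_dvd (f := fun i => n.choose i) hmem)
  -- Lucas's theorem: choose n (p^a) ≡ s [MOD p]
  have hl := Choose.choose_modEq_choose_mul_prod_range_choose (n := n) (k := p ^ a) (p := p) a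
  have hka : p ^ a / p ^ a = 1 := Nat.div_self (by positivity)
  have hzero : ∀ i ∈ Finset.range a, p ^ a / p ^ i % p = 0 := by
    intro i hi
    rw [Finset.mem_range] at hi
    rw [Nat.pow_div (le_of_lt hi) hp.pos]
    obtain ⟨c, hc⟩ := dvd_pow_self p (Nat.sub_ne_zero_of_lt hi)
    rw [hc, Nat.mul_mod_right]
  have hlnat : n.choose (p ^ a) ≡ (n / p ^ a).choose (p ^ a / p ^ a) *
      ∏ i ∈ Finset.range a, (n / p ^ i % p).choose (p ^ a / p ^ i % p) [MOD p] := by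
    rw [← Int.natCast_modEq_iff]
    exact_mod_cast hl
  have hprod : ∏ i ∈ Finset.range a, (n / p ^ i % p).choose (p ^ a / p ^ i % p) = 1 :=
    Finset.prod_eq_one fun i hi => by rw [hzero i hi, Nat.choose_zero_right]
  rw [hprod, mul_one, hka, ← hs, Nat.choose_one_right] at hlnat
  exact hps ((Nat.modEq_zero_iff_dvd).mp (hlnat.symm.trans ((Nat.modEq_zero_iff_dvd).mpr h2)))
end
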